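/- Any matrix of the form E = R [t]× S, where R, S are 3×3 orthogonal matrices with determinant 1 and t ∈ ℝ³, satisfies the cubic essential-matrix equation EᵀEEᵀ − (1/2)tr(EᵀE)·Eᵀ = 0. -/

import Mathlib

/-!
The cubic expression `EᵀEEᵀ − ½ tr(EᵀE) Eᵀ` is equivariant under `E ↦ R E S` for orthogonal
`R, S` (it becomes `Sᵀ (·) Rᵀ`, since `tr(EᵀE)` is invariant), so it suffices to treat
`E = [t]×`. That matrix is antisymmetric with characteristic polynomial `λ³ + |t|² λ`, hence
`[t]×³ = −|t|² [t]×` and `tr([t]×²) = −2|t|²`, which make the expression vanish.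
-/

open Matrix

/-- The cross-product matrix of a vector `a ∈ ℝ³`. -/
def skew (a : Fin 3 → ℝ) : Matrix (Fin 3) (Fin 3) ℝ :=
  !![0, -a 2, a 1; a 2, 0, -a 0; -a 1, a 0, 0]

section

variable {n α : Type*} [Fintype n] [DecidableEq n] [Field α]

def essentialCubic (E : Matrix n n α) : Matrix n n α :=
  Eᵀ * E * Eᵀ - ((1 : α) / 2 * trace (Eᵀ * E)) • Eᵀ

theorem essentialCubic_mul_mul_of_mul_transpose_eq_one {R S : Matrix n n α}
    (hR : R * Rᵀ = 1) (hS : S * Sᵀ = 1) (K : Matrix n n α) :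
    essentialCubic (R * K * S) = Sᵀ * essentialCubic K * Rᵀ := by
  have hgram : (R * K * S)ᵀ * (R * K * S) = Sᵀ * (Kᵀ * K) * S := by
    simp only [transpose_mul, Matrix.mul_assoc]
    rw [← Matrix.mul_assoc Rᵀ R, mul_eq_one_comm.mp hR, Matrix.one_mul]
  have hcube : (R * K * S)ᵀ * (R * K * S) * (R * K * S)ᵀ = Sᵀ * (Kᵀ * K * Kᵀ) * Rᵀ := by
    rw [hgram, transpose_mul, transpose_mul]
    simp only [Matrix.mul_assoc]
    rw [← Matrix.mul_assoc S Sᵀ, hS, Matrix.one_mul]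
  have htrace : trace ((R * K * S)ᵀ * (R * K * S)) = trace (Kᵀ * K) := by
    rw [hgram, trace_mul_cycle, ← Matrix.mul_assoc, hS, Matrix.one_mul]
  rw [essentialCubic, hcube, htrace, transpose_mul, transpose_mul]
  simp only [essentialCubic, Matrix.mul_sub, Matrix.sub_mul, Matrix.mul_smul, Matrix.smul_mul,
    Matrix.mul_assoc]

end

theorem skew_transpose (t : Fin 3 → ℝ) : (skew t)ᵀ = -skew t := by
  ext i j
  fin_cases i <;> fin_cases j <;> simp [skew]

theorem skew_mul_skew_mul_skew (t : Fin 3 → ℝ) :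
    skew t * skew t * skew t = -(t ⬝ᵥ t) • skew t := by
  ext i j
  fin_cases i <;> fin_cases j <;> simp [skew, mul_apply, dotProduct, Fin.sum_univ_succ] <;> ring

theorem trace_skew_mul_skew (t : Fin 3 → ℝ) : trace (skew t * skew t) = -2 * (t ⬝ᵥ t) := by
  simp [skew, trace, dotProduct, Fin.sum_univ_succ]
  ring

theorem essentialCubic_skew (t : Fin 3 → ℝ) : essentialCubic (skew t) = 0 := by
  rw [essentialCubic, skew_transpose, Matrix.neg_mul, trace_neg, trace_skew_mul_skew,
    Matrix.neg_mul, Matrix.mul_neg, neg_neg, skew_mul_skew_mul_skew]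
  module

theorem essential_cubic_constraint (R S : Matrix (Fin 3) (Fin 3) ℝ) (t : Fin 3 → ℝ)
    (hR : R * Rᵀ = 1) (hS : S * Sᵀ = 1)
    (E : Matrix (Fin 3) (Fin 3) ℝ) (hE : E = R * skew t * S) :
    Eᵀ * E * Eᵀ - ((1 : ℝ) / 2 * Matrix.trace (Eᵀ * E)) • Eᵀ = 0 := by
  change essentialCubic E = 0
  rw [hE, essentialCubic_mul_mul_of_mul_transpose_eq_one hR hS, essentialCubic_skew,
    Matrix.mul_zero, Matrix.zero_mul]
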